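/- arXiv:1510.08986 — 2 statements merged into one kernel-verified Lean document; each statement's English description precedes it below -/
import Mathlib

section
/- Let M, N ∈ R^{d×d} with ‖M − N‖_max := max_{ij}|M_{ij} − N_{ij}| ≤ ε, and let ξ ≥ 0, s ∈ N. For any u ∈ R^d with ‖u_{S^c}‖₁ ≤ ξ‖u_S‖₁ for some |S| ≤ s, it holds |uᵀMu − uᵀNu| ≤ ε(1+ξ)² ‖u_S‖₁² ≤ ε(1+ξ)² s ‖u_S‖₂². Consequently, if the restricted eigenvalue RE_N(s,ξ) = min over such S, u of uᵀNu/‖u_S‖₂² satisfies RE_N(s,ξ) ≥ δ and ε(1+ξ)² s ≤ (1−κ)δ for some κ ∈ (0,1), then RE_M(s,ξ) ≥ κδ. -/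
open Matrix Finset

/-! The entrywise bound on `M - N` gives `|vᵀ(M - N)u| ≤ ε ‖v‖₁ ‖u‖₁`. On the cone
`‖u_{Sᶜ}‖₁ ≤ ξ ‖u_S‖₁` the full `ℓ₁` norm is at most `(1 + ξ) ‖u_S‖₁`, and Cauchy–Schwarz gives
`‖u_S‖₁² ≤ s ‖u_S‖₂²`. Hence the quadratic forms of `M` and `N` differ by at most
`ε (1 + ξ)² s ‖u_S‖₂² ≤ (1 - κ) δ ‖u_S‖₂²`, which leaves `κ δ` of the restricted eigenvalue. -/

section

variable {m n : Type*} [Fintype n]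

theorem abs_mulVec_apply_le {A : Matrix m n ℝ} {ε : ℝ} (hA : ∀ i j, |A i j| ≤ ε)
    (u : n → ℝ) (i : m) : |(A *ᵥ u) i| ≤ ε * ∑ j, |u j| := by
  rw [mul_sum]
  refine (abs_sum_le_sum_abs _ _).trans (sum_le_sum fun j _ => ?_)
  rw [abs_mul]
  exact mul_le_mul_of_nonneg_right (hA i j) (abs_nonneg _)

theorem abs_dotProduct_mulVec_le [Fintype m] {A : Matrix m n ℝ} {ε : ℝ} (hA : ∀ i j, |A i j| ≤ ε)
    (v : m → ℝ) (u : n → ℝ) : |v ⬝ᵥ A *ᵥ u| ≤ ε * (∑ i, |v i|) * ∑ j, |u j| :=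
  calc |v ⬝ᵥ A *ᵥ u| ≤ ∑ i, |v i| * |(A *ᵥ u) i| := by
        simpa only [dotProduct, abs_mul] using abs_sum_le_sum_abs (fun i => v i * (A *ᵥ u) i) univ
    _ ≤ ∑ i, |v i| * (ε * ∑ j, |u j|) :=
        sum_le_sum fun i _ => mul_le_mul_of_nonneg_left (abs_mulVec_apply_le hA u i) (abs_nonneg _)
    _ = ε * (∑ i, |v i|) * ∑ j, |u j| := by rw [← sum_mul]; ring

end

section

variable {ι : Type*} [Fintype ι] [DecidableEq ι]

theorem sum_le_one_add_mul_sum_of_sum_compl_le {f : ι → ℝ} {S : Finset ι} {ξ : ℝ}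
    (h : ∑ j ∈ Sᶜ, f j ≤ ξ * ∑ j ∈ S, f j) : ∑ j, f j ≤ (1 + ξ) * ∑ j ∈ S, f j := by
  rw [← sum_add_sum_compl S f]
  linarith

theorem abs_dotProduct_mulVec_sub_le_of_cone {M N : Matrix ι ι ℝ} {ε ξ : ℝ}
    (hMN : ∀ i j, |M i j - N i j| ≤ ε) (hε : 0 ≤ ε) {S : Finset ι} {u : ι → ℝ}
    (hu : ∑ j ∈ Sᶜ, |u j| ≤ ξ * ∑ j ∈ S, |u j|) :
    |u ⬝ᵥ M *ᵥ u - u ⬝ᵥ N *ᵥ u| ≤ ε * (1 + ξ) ^ 2 * (∑ j ∈ S, |u j|) ^ 2 := by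
  have hl1 : (∑ j, |u j|) ^ 2 ≤ ((1 + ξ) * ∑ j ∈ S, |u j|) ^ 2 :=
    pow_le_pow_left₀ (sum_nonneg fun j _ => abs_nonneg _)
      (sum_le_one_add_mul_sum_of_sum_compl_le hu) 2
  have hsub : |u ⬝ᵥ (M - N) *ᵥ u| ≤ ε * (∑ j, |u j|) ^ 2 := by
    rw [sq, ← mul_assoc]
    exact abs_dotProduct_mulVec_le (fun i j => by simpa only [Matrix.sub_apply] using hMN i j) u u
  calc |u ⬝ᵥ M *ᵥ u - u ⬝ᵥ N *ᵥ u| = |u ⬝ᵥ (M - N) *ᵥ u| := by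
        rw [sub_mulVec, dotProduct_sub]
    _ ≤ ε * ((1 + ξ) * ∑ j ∈ S, |u j|) ^ 2 := hsub.trans (mul_le_mul_of_nonneg_left hl1 hε)
    _ = ε * (1 + ξ) ^ 2 * (∑ j ∈ S, |u j|) ^ 2 := by ring

end

theorem sq_sum_abs_le_mul_sum_sq {ι : Type*} {S : Finset ι} {s : ℕ} (hS : #S ≤ s)
    (u : ι → ℝ) : (∑ j ∈ S, |u j|) ^ 2 ≤ s * ∑ j ∈ S, u j ^ 2 :=
  calc (∑ j ∈ S, |u j|) ^ 2 ≤ #S * ∑ j ∈ S, u j ^ 2 := by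
        simpa only [sq_abs] using sq_sum_le_card_mul_sum_sq (s := S) (f := fun j => |u j|)
    _ ≤ s * ∑ j ∈ S, u j ^ 2 :=
        mul_le_mul_of_nonneg_right (by exact_mod_cast hS) (sum_nonneg fun j _ => sq_nonneg _)

theorem re_perturbation_general (d s : ℕ) (M N : Matrix (Fin d) (Fin d) ℝ) (ε ξ : ℝ)
    (hε : 0 ≤ ε)
    (hMN : ∀ i j, |M i j - N i j| ≤ ε) :
    (∀ S : Finset (Fin d), S.card ≤ s → ∀ u : Fin d → ℝ,
        (∑ j ∈ Sᶜ, |u j|) ≤ ξ * ∑ j ∈ S, |u j| →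
        |u ⬝ᵥ M.mulVec u - u ⬝ᵥ N.mulVec u| ≤ ε * (1 + ξ) ^ 2 * (∑ j ∈ S, |u j|) ^ 2
        ∧ ε * (1 + ξ) ^ 2 * (∑ j ∈ S, |u j|) ^ 2
            ≤ ε * (1 + ξ) ^ 2 * s * (∑ j ∈ S, u j ^ 2))
    ∧ ∀ δ κ : ℝ, 0 < κ → κ < 1 →
        (∀ S : Finset (Fin d), S.card ≤ s → ∀ u : Fin d → ℝ, u ≠ 0 →
          (∑ j ∈ Sᶜ, |u j|) ≤ ξ * ∑ j ∈ S, |u j| →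
          δ * (∑ j ∈ S, u j ^ 2) ≤ u ⬝ᵥ N.mulVec u) →
        ε * (1 + ξ) ^ 2 * s ≤ (1 - κ) * δ →
        ∀ S : Finset (Fin d), S.card ≤ s → ∀ u : Fin d → ℝ, u ≠ 0 →
          (∑ j ∈ Sᶜ, |u j|) ≤ ξ * ∑ j ∈ S, |u j| →
          κ * δ * (∑ j ∈ S, u j ^ 2) ≤ u ⬝ᵥ M.mulVec u := by
  have hcs : ∀ S : Finset (Fin d), #S ≤ s → ∀ u : Fin d → ℝ,
      ε * (1 + ξ) ^ 2 * (∑ j ∈ S, |u j|) ^ 2 ≤ ε * (1 + ξ) ^ 2 * s * (∑ j ∈ S, u j ^ 2) :=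
    fun S hS u => by
      rw [mul_assoc _ (s : ℝ)]
      exact mul_le_mul_of_nonneg_left (sq_sum_abs_le_mul_sum_sq hS u) (by positivity)
  refine ⟨fun S hS u hu => ⟨abs_dotProduct_mulVec_sub_le_of_cone hMN hε hu, hcs S hS u⟩,
    fun δ κ _ _ hN hεs S hS u hu0 hu => ?_⟩
  have hdiff := (abs_dotProduct_mulVec_sub_le_of_cone hMN hε hu).trans (hcs S hS u)
  have hslack := mul_le_mul_of_nonneg_right hεs (sum_nonneg fun j (_ : j ∈ S) => sq_nonneg (u j))
  linarith [(abs_le.mp hdiff).1, hN S hS u hu0 hu]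

/-- Restricted-eigenvalue perturbation: if ‖M − N‖_max ≤ ε then on the cone
‖u_{S^c}‖₁ ≤ ξ‖u_S‖₁ (|S| ≤ s) one has
|uᵀMu − uᵀNu| ≤ ε(1+ξ)²‖u_S‖₁² ≤ ε(1+ξ)² s ‖u_S‖₂²; consequently if
RE_N(s,ξ) ≥ δ and ε(1+ξ)² s ≤ (1−κ)δ with κ ∈ (0,1), then RE_M(s,ξ) ≥ κδ. -/
theorem re_perturbation (d s : ℕ) (M N : Matrix (Fin d) (Fin d) ℝ) (ε ξ : ℝ)
    (hε : 0 ≤ ε) (hξ : 0 ≤ ξ)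
    (hMN : ∀ i j, |M i j - N i j| ≤ ε) :
    (∀ S : Finset (Fin d), S.card ≤ s → ∀ u : Fin d → ℝ,
        (∑ j ∈ Sᶜ, |u j|) ≤ ξ * ∑ j ∈ S, |u j| →
        |u ⬝ᵥ M.mulVec u - u ⬝ᵥ N.mulVec u| ≤ ε * (1 + ξ) ^ 2 * (∑ j ∈ S, |u j|) ^ 2
        ∧ ε * (1 + ξ) ^ 2 * (∑ j ∈ S, |u j|) ^ 2
            ≤ ε * (1 + ξ) ^ 2 * s * (∑ j ∈ S, u j ^ 2))
    ∧ ∀ δ κ : ℝ, 0 < κ → κ < 1 →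
        (∀ S : Finset (Fin d), S.card ≤ s → ∀ u : Fin d → ℝ, u ≠ 0 →
          (∑ j ∈ Sᶜ, |u j|) ≤ ξ * ∑ j ∈ S, |u j| →
          δ * (∑ j ∈ S, u j ^ 2) ≤ u ⬝ᵥ N.mulVec u) →
        ε * (1 + ξ) ^ 2 * s ≤ (1 - κ) * δ →
        ∀ S : Finset (Fin d), S.card ≤ s → ∀ u : Fin d → ℝ, u ≠ 0 →
          (∑ j ∈ Sᶜ, |u j|) ≤ ξ * ∑ j ∈ S, |u j| →
          κ * δ * (∑ j ∈ S, u j ^ 2) ≤ u ⬝ᵥ M.mulVec u :=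
  re_perturbation_general d s M N ε ξ hε hMN
end

section
/- Let (X_n(r)) and (ξ_n(r)) be sequences of random variables indexed by a parameter r in a set R, defined on probability spaces with measures P_r. Suppose (i) lim_n sup_{r∈R} sup_t |P_r(X_n(r) ≤ t) − F(t)| = 0, where F is a continuous cdf that is Lipschitz with constant κ, and (ii) there is τ(n) → 0 with lim_n inf_{r∈R} P_r(|1 − ξ_n(r)| ≤ τ(n)) = 1. If additionally sup_t |t|(1−F(|t|)+F(−|t|)) is bounded appropriately (e.g., F is the standard normal cdf), then lim_n sup_{r∈R} sup_t |P_r(X_n(r)/ξ_n(r) ≤ t) − F(t)| = 0. -/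
open MeasureTheory Filter

/-- Uniform Slutsky lemma: if X_n(r) is uniformly (over r and t) asymptotically distributed
according to a continuous Lipschitz cdf F with the tail-decay property
sup_t |t|(1 − F(|t|) + F(−|t|)) < ∞ (e.g. the standard normal cdf), and ξ_n(r) converges to 1
uniformly in probability at some rate τ(n) → 0, then X_n(r)/ξ_n(r) is uniformly
asymptotically F-distributed. -/
theorem uniform_slutsky {Ω R : Type*} [MeasurableSpace Ω]
    (P : R → Measure Ω) (hP : ∀ r, IsProbabilityMeasure (P r))
    (X ξ : ℕ → R → Ω → ℝ)
    (hXm : ∀ n r, Measurable (X n r)) (hξm : ∀ n r, Measurable (ξ n r))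
    (F : ℝ → ℝ) (κ : ℝ) (hκ : 0 < κ)
    (hFmono : Monotone F) (hFcont : Continuous F)
    (hFlip : ∀ s t : ℝ, |F t - F s| ≤ κ * |t - s|)
    (hFbot : Tendsto F atBot (nhds 0)) (hFtop : Tendsto F atTop (nhds 1))
    (hFtail : ∃ C : ℝ, ∀ t : ℝ, |t| * (1 - F |t| + F (-|t|)) ≤ C)
    (hX : ∀ ε : ℝ, 0 < ε → ∃ N : ℕ, ∀ n ≥ N, ∀ r, ∀ t : ℝ,
      |((P r) {ω | X n r ω ≤ t}).toReal - F t| ≤ ε)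
    (τ : ℕ → ℝ) (hτ : Tendsto τ atTop (nhds 0))
    (hξ : ∀ ε : ℝ, 0 < ε → ∃ N : ℕ, ∀ n ≥ N, ∀ r,
      1 - ε ≤ ((P r) {ω | |1 - ξ n r ω| ≤ τ n}).toReal) :
    ∀ ε : ℝ, 0 < ε → ∃ N : ℕ, ∀ n ≥ N, ∀ r, ∀ t : ℝ,
      |((P r) {ω | X n r ω / ξ n r ω ≤ t}).toReal - F t| ≤ ε := by
  intro ε hε
  obtain ⟨C, hC⟩ := hFtail
  set M : ℝ := max 1 (8 * C / ε) with hMdef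
  have hM1 : (1 : ℝ) ≤ M := le_max_left _ _
  have hM0 : (0 : ℝ) < M := lt_of_lt_of_le one_pos hM1
  have hMC : 8 * C ≤ M * ε := by
    have : 8 * C / ε ≤ M := le_max_right _ _
    calc 8 * C = (8 * C / ε) * ε := by field_simp
      _ ≤ M * ε := by nlinarith
  -- Bounds 0 ≤ F ≤ 1
  have hF0 : ∀ s, 0 ≤ F s := by
    intro s
    refine le_of_tendsto hFbot (Filter.eventually_atBot.2 ⟨s, fun x hx => hFmono hx⟩)
  have hF1 : ∀ s, F s ≤ 1 := by
    intro s
    refine ge_of_tendsto hFtop (Filter.eventually_atTop.2 ⟨s, fun x hx => hFmono hx⟩)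
  -- tail bounds at M/2
  have htailM := hC (M / 2)
  have habsM : |M / 2| = M / 2 := abs_of_pos (by linarith)
  rw [habsM] at htailM
  have hFM : 1 - F (M / 2) ≤ ε / 4 := by
    have h1 := hF0 (-(M / 2))
    nlinarith
  have hFm : F (-(M / 2)) ≤ ε / 4 := by
    have h1 := hF1 (M / 2)
    nlinarith
  -- choose N
  obtain ⟨N1, hN1⟩ := hX (ε / 4) (by positivity)
  obtain ⟨N2, hN2⟩ := hξ (ε / 4) (by positivity)
  have hδ : (0 : ℝ) < min (1 / 2) (ε / (4 * κ * M)) := by positivity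
  obtain ⟨N3, hN3⟩ := (Metric.tendsto_atTop.mp hτ) _ hδ
  refine ⟨max N1 (max N2 N3), ?_⟩
  intro n hn r t
  haveI := hP r
  have hn1 : n ≥ N1 := le_trans (le_max_left _ _) hn
  have hn2 : n ≥ N2 := le_trans (le_max_left _ _) (le_trans (le_max_right _ _) hn)
  have hn3 : n ≥ N3 := le_trans (le_max_right _ _) (le_trans (le_max_right _ _) hn)
  have hτn : |τ n| ≤ min (1 / 2) (ε / (4 * κ * M)) := by
    have := hN3 n hn3
    rw [Real.dist_eq, sub_zero] at this
    exact le_of_lt this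
  have hτhalf : |τ n| ≤ 1 / 2 := le_trans hτn (min_le_left _ _)
  have hτκ : κ * M * |τ n| ≤ ε / 4 := by
    have h1 : |τ n| ≤ ε / (4 * κ * M) := le_trans hτn (min_le_right _ _)
    have h2 : |τ n| * (4 * κ * M) ≤ ε := by
      rw [le_div_iff₀ (by positivity)] at h1; exact h1
    nlinarith
  -- the good event
  set A : Set Ω := {ω | |1 - ξ n r ω| ≤ τ n} with hAdef
  have hAm : MeasurableSet A :=
    measurableSet_le ((measurable_const.sub (hξm n r)).abs) measurable_const
  have hAc : ((P r) Aᶜ).toReal ≤ ε / 4 := by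
    have h1 : (P r) A + (P r) Aᶜ = 1 := by
      rw [measure_add_measure_compl hAm, measure_univ]
    have h2 : ((P r) A).toReal + ((P r) Aᶜ).toReal = 1 := by
      rw [← ENNReal.toReal_add (measure_ne_top _ _) (measure_ne_top _ _), h1]
      simp
    have h3 := hN2 n hn2 r
    rw [← hAdef] at h3
    linarith
  -- measure subadditivity helper
  have key_meas : ∀ S T U : Set Ω, S ⊆ T ∪ U →
      ((P r) S).toReal ≤ ((P r) T).toReal + ((P r) U).toReal := by
    intro S T U h
    have h1 : (P r) S ≤ (P r) T + (P r) U :=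
      le_trans (measure_mono h) (measure_union_le T U)
    have h2 := ENNReal.toReal_mono
      (ENNReal.add_ne_top.2 ⟨measure_ne_top _ _, measure_ne_top _ _⟩) h1
    rwa [ENNReal.toReal_add (measure_ne_top _ _) (measure_ne_top _ _)] at h2
  -- on A, ξ is close to 1 and positive
  have hAfacts : ∀ ω ∈ A, 0 < ξ n r ω ∧ |t * (ξ n r ω - 1)| ≤ |t| * τ n := by
    intro ω hω
    have hω' : |1 - ξ n r ω| ≤ τ n := hω
    have hτpos : τ n ≤ 1 / 2 := le_trans (le_abs_self _) hτhalf
    have h1 := abs_le.mp (le_trans hω' hτpos)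
    constructor
    · linarith [h1.2]
    · rw [abs_mul]
      have : |ξ n r ω - 1| = |1 - ξ n r ω| := abs_sub_comm _ _
      rw [this]
      exact mul_le_mul_of_nonneg_left hω' (abs_nonneg t)
  -- set inclusions
  have hsub1 : {ω | X n r ω / ξ n r ω ≤ t} ⊆ {ω | X n r ω ≤ t + |t| * τ n} ∪ Aᶜ := by
    intro ω hω
    by_cases hA : ω ∈ A
    · left
      obtain ⟨hpos, hbd⟩ := hAfacts ω hA
      have hX' : X n r ω ≤ t * ξ n r ω := (div_le_iff₀ hpos).mp hω
      have := (abs_le.mp hbd).2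
      have heq : t * ξ n r ω = t + t * (ξ n r ω - 1) := by ring
      show X n r ω ≤ t + |t| * τ n
      linarith [heq ▸ hX']
    · right; exact hA
  have hsub2 : {ω | X n r ω ≤ t - |t| * τ n} ⊆ {ω | X n r ω / ξ n r ω ≤ t} ∪ Aᶜ := by
    intro ω hω
    by_cases hA : ω ∈ A
    · left
      obtain ⟨hpos, hbd⟩ := hAfacts ω hA
      have := (abs_le.mp hbd).1
      have hω' : X n r ω ≤ t - |t| * τ n := hω
      have heq : t * ξ n r ω = t + t * (ξ n r ω - 1) := by ring
      have hX' : X n r ω ≤ t * ξ n r ω := by linarith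
      show X n r ω / ξ n r ω ≤ t
      exact (div_le_iff₀ hpos).mpr hX'
    · right; exact hA
  -- F perturbation bounds
  have hup : F (t + |t| * τ n) ≤ F t + ε / 4 := by
    by_cases hM' : |t| ≤ M
    · have h1 := hFlip t (t + |t| * τ n)
      have h2 : |t + |t| * τ n - t| = |t| * |τ n| := by
        rw [add_sub_cancel_left, abs_mul, abs_abs]
      rw [h2] at h1
      have h3 : κ * (|t| * |τ n|) ≤ κ * M * |τ n| := by
        rw [← mul_assoc]
        exact mul_le_mul_of_nonneg_right
          (mul_le_mul_of_nonneg_left hM' hκ.le) (abs_nonneg _)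
      have := (abs_le.mp h1).2
      linarith
    · push_neg at hM'
      rcases le_or_gt 0 t with ht | ht
      · have htM : M < t := by rwa [abs_of_nonneg ht] at hM'
        have hFt : F (M / 2) ≤ F t := hFmono (by linarith)
        have := hF1 (t + |t| * τ n)
        linarith
      · have htM : t < -M := by
          rw [abs_of_neg ht] at hM'; linarith
        have hkey : t + |t| * τ n ≤ -(M / 2) := by
          rw [abs_of_neg ht]
          have hτ2 : τ n ≤ 1 / 2 := le_trans (le_abs_self _) hτhalf
          have h4 : t * (1 - τ n) ≤ t * (1 / 2) :=
            mul_le_mul_of_nonpos_left (by linarith) (le_of_lt ht)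
          have h5 : t + -t * τ n = t * (1 - τ n) := by ring
          linarith
        have := hFmono hkey
        have := hF0 t
        linarith
  have hlo : F t - ε / 4 ≤ F (t - |t| * τ n) := by
    by_cases hM' : |t| ≤ M
    · have h1 := hFlip t (t - |t| * τ n)
      have h2 : |t - |t| * τ n - t| = |t| * |τ n| := by
        rw [sub_sub_cancel_left, abs_neg, abs_mul, abs_abs]
      rw [h2] at h1
      have h3 : κ * (|t| * |τ n|) ≤ κ * M * |τ n| := by
        rw [← mul_assoc]
        exact mul_le_mul_of_nonneg_right
          (mul_le_mul_of_nonneg_left hM' hκ.le) (abs_nonneg _)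
      have := (abs_le.mp h1).1
      linarith
    · push_neg at hM'
      rcases le_or_gt 0 t with ht | ht
      · have htM : M < t := by rwa [abs_of_nonneg ht] at hM'
        have hkey : M / 2 ≤ t - |t| * τ n := by
          rw [abs_of_nonneg ht]
          have hτ2 : τ n ≤ 1 / 2 := le_trans (le_abs_self _) hτhalf
          have h4 : t * (1 / 2) ≤ t * (1 - τ n) :=
            mul_le_mul_of_nonneg_left (by linarith) ht
          have h5 : t - t * τ n = t * (1 - τ n) := by ring
          linarith
        have := hFmono hkey
        have := hF1 t
        linarith
      · have htM : t < -M := by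
          rw [abs_of_neg ht] at hM'; linarith
        have hFt : F t ≤ F (-(M / 2)) := hFmono (by linarith)
        have := hF0 (t - |t| * τ n)
        linarith
  -- combine
  have h1 := hN1 n hn1 r (t + |t| * τ n)
  have h2 := hN1 n hn1 r (t - |t| * τ n)
  have hu := key_meas _ _ _ hsub1
  have hl := key_meas _ _ _ hsub2
  have ha1 := (abs_le.mp h1).2
  have ha2 := (abs_le.mp h2).1
  rw [abs_le]
  constructor
  · linarith
  · linarith
end
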